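/- arXiv:2512.19258 — 7 statements merged into one kernel-verified Lean document; each statement's English description precedes it below -/
import Mathlib

section
/- Let M ∈ ℝ^{n×n} be entrywise nonnegative and row-substochastic (every row sum at most 1, and at least one row sum strictly less than 1), and suppose that in the directed graph associated to M every node whose row sum equals 1 is reachable by a directed path from some node whose row sum is strictly less than 1. Then ρ(M) < 1. -/
/-- The spectral radius of a real square matrix. -/
noncomputable def specRad {m : Type*} [Fintype m] [DecidableEq m]
    (M : Matrix m m ℝ) : ENNReal :=
  spectralRadius ℂ (M.map (algebraMap ℝ ℂ))

/-- In the digraph associated with `M` (edge `(j,i)` iff `M i j ≠ 0`), node `b` is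
reachable from node `a` by a directed path. -/
def MatReachable {n : ℕ} (M : Matrix (Fin n) (Fin n) ℝ) (a b : Fin n) : Prop :=
  Relation.ReflTransGen (fun u v => M v u ≠ 0) a b

/-- A nonnegative, row-substochastic matrix (all row sums at most 1, at least one
row sum strictly less than 1), in which every node with row sum equal to 1 is
reachable from a node with row sum strictly less than 1, has spectral radius
strictly less than 1. -/
theorem specRad_lt_one_of_substochastic {n : ℕ} (M : Matrix (Fin n) (Fin n) ℝ)
    (hnonneg : ∀ i j, 0 ≤ M i j)
    (hrow : ∀ i, ∑ j, M i j ≤ 1)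
    (hstrict : ∃ i, ∑ j, M i j < 1)
    (hreach : ∀ i, ∑ j, M i j = 1 → ∃ j, (∑ l, M j l < 1) ∧ MatReachable M j i) :
    specRad M < 1 := by
  obtain ⟨i0, hi0⟩ := hstrict
  -- nonnegativity of powers
  have hpow_nonneg : ∀ k i j, 0 ≤ (M ^ k) i j := by
    intro k
    induction k with
    | zero => intro i j; by_cases h : i = j <;> simp [Matrix.one_apply, h]
    | succ k ih =>
      intro i j
      rw [pow_succ, Matrix.mul_apply]
      exact Finset.sum_nonneg fun l _ => mul_nonneg (ih i l) (hnonneg l j)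
  set rs : ℕ → Fin n → ℝ := fun k i => ∑ j, (M ^ k) i j with hrs
  have hrs0 : ∀ i, rs 0 i = 1 := by
    intro i; simp [hrs, Matrix.one_apply]
  have hrec : ∀ k i, rs (k + 1) i = ∑ l, M i l * rs k l := by
    intro k i
    simp only [hrs]
    rw [pow_succ']
    simp only [Matrix.mul_apply]
    rw [Finset.sum_comm]
    simp [Finset.mul_sum]
  have hrec' : ∀ k i, rs (k + 1) i = ∑ l, (M ^ k) i l * rs 1 l := by
    intro k i
    simp only [hrs]
    rw [pow_succ]
    simp only [Matrix.mul_apply]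
    rw [Finset.sum_comm]
    simp [Finset.mul_sum, pow_one]
  have hrs1 : ∀ i, rs 1 i = ∑ j, M i j := by intro i; simp [hrs]
  have hrs_le_one : ∀ k i, rs k i ≤ 1 := by
    intro k
    induction k with
    | zero => intro i; rw [hrs0]
    | succ k ih =>
      intro i
      rw [hrec]
      calc ∑ l, M i l * rs k l ≤ ∑ l, M i l * 1 :=
            Finset.sum_le_sum fun l _ => mul_le_mul_of_nonneg_left (ih l) (hnonneg i l)
        _ = ∑ l, M i l := by simp
        _ ≤ 1 := hrow i
  have hrs_nonneg : ∀ k i, 0 ≤ rs k i :=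
    fun k i => Finset.sum_nonneg fun j _ => hpow_nonneg k i j
  have hstep' : ∀ k i, rs (k + 1) i ≤ rs k i := by
    intro k i
    rw [hrec']
    calc ∑ l, (M ^ k) i l * rs 1 l ≤ ∑ l, (M ^ k) i l * 1 :=
          Finset.sum_le_sum fun l _ =>
            mul_le_mul_of_nonneg_left (le_trans (le_of_eq (hrs1 l)) (hrow l)) (hpow_nonneg k i l)
      _ = rs k i := by simp [hrs]
  have hmono : ∀ (k m : ℕ), k ≤ m → ∀ i, rs m i ≤ rs k i := by
    intro k m h
    induction h with
    | refl => exact fun i => le_rfl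
    | step h ih => exact fun i => le_trans (hstep' _ i) (ih i)
  have hstep : ∀ k i j, M i j ≠ 0 → rs k j < 1 → rs (k + 1) i < 1 := by
    intro k i j hMij hj
    rw [hrec]
    have : ∑ l, M i l * rs k l < ∑ l, M i l * 1 := by
      refine Finset.sum_lt_sum (fun l _ => mul_le_mul_of_nonneg_left (hrs_le_one k l) (hnonneg i l)) ⟨j, Finset.mem_univ j, ?_⟩
      have hMpos : 0 < M i j := lt_of_le_of_ne (hnonneg i j) (Ne.symm hMij)
      exact (mul_lt_mul_iff_right₀ hMpos).mpr hj
    calc ∑ l, M i l * rs k l < ∑ l, M i l * 1 := this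
      _ = ∑ l, M i l := by simp
      _ ≤ 1 := hrow i
  have hexists : ∀ i, ∃ k, rs k i < 1 := by
    have key : ∀ a b : Fin n, Relation.ReflTransGen (fun u v => M v u ≠ 0) a b →
        rs 1 a < 1 → ∃ k, rs k b < 1 := by
      intro a b h
      induction h with
      | refl => intro ha; exact ⟨1, ha⟩
      | tail _ hbc ih =>
        intro ha
        obtain ⟨k, hk⟩ := ih ha
        exact ⟨k + 1, hstep k _ _ hbc hk⟩
    intro i
    rcases lt_or_eq_of_le (hrow i) with h | h
    · exact ⟨1, by rw [hrs1]; exact h⟩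
    · obtain ⟨j, hj1, hjr⟩ := hreach i h
      exact key j i hjr (by rw [hrs1]; exact hj1)
  choose f hf using hexists
  set K : ℕ := Finset.univ.sup f with hKdef
  have hK : ∀ i, rs K i < 1 := fun i =>
    lt_of_le_of_lt (hmono _ _ (Finset.le_sup (Finset.mem_univ i)) i) (hf i)
  have hKne : K ≠ 0 := by
    intro h
    have := hK i0
    rw [h, hrs0] at this
    exact lt_irrefl 1 this
  -- the uniform bound c
  have hne : (Finset.univ : Finset (Fin n)).Nonempty := ⟨i0, Finset.mem_univ i0⟩
  set c : ℝ := Finset.univ.sup' hne (rs K) with hc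
  have hc1 : c < 1 := (Finset.sup'_lt_iff hne).mpr fun i _ => hK i
  have hc0 : 0 ≤ c := le_trans (hrs_nonneg K i0) (Finset.le_sup' _ (Finset.mem_univ i0))
  have hcle : ∀ i, rs K i ≤ c := fun i => Finset.le_sup' _ (Finset.mem_univ i)
  -- eigenvalue bound
  have heig : ∀ μ : ℂ, μ ∈ spectrum ℂ (M.map (algebraMap ℝ ℂ)) → ‖μ‖ ^ K ≤ c := by
    intro μ hμ
    rw [← AlgEquiv.spectrum_eq (Matrix.toLinAlgEquiv' (R := ℂ) (n := Fin n)) _] at hμ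
    obtain ⟨v, hv, hv0⟩ := (Module.End.HasEigenvalue.of_mem_spectrum hμ).exists_hasEigenvector
    have hev : (M.map (algebraMap ℝ ℂ)).mulVec v = μ • v := by
      simpa [Matrix.toLinAlgEquiv'_apply] using Module.End.mem_eigenspace_iff.mp hv
    have hevK : ((M ^ K).map (algebraMap ℝ ℂ)).mulVec v = μ ^ K • v := by
      have hmap : ∀ m : ℕ, (M ^ m).map (algebraMap ℝ ℂ) = (M.map (algebraMap ℝ ℂ)) ^ m := by
        intro m
        simpa [RingHom.mapMatrix_apply] using map_pow ((algebraMap ℝ ℂ).mapMatrix) M m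
      rw [hmap]
      induction K with
      | zero => simp
      | succ k ih =>
        rw [pow_succ', ← Matrix.mulVec_mulVec, ih, Matrix.mulVec_smul, hev,
          pow_succ', smul_smul, mul_comm]
    -- pick max coordinate
    obtain ⟨i, -, hi⟩ := Finset.exists_max_image Finset.univ (fun j => ‖v j‖) hne
    have hvi : 0 < ‖v i‖ := by
      obtain ⟨j, hj⟩ := Function.ne_iff.mp hv0
      exact lt_of_lt_of_le (norm_pos_iff.mpr hj) (hi j (Finset.mem_univ j))
    have hbound : ‖μ‖ ^ K * ‖v i‖ ≤ c * ‖v i‖ := by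
      have h1 : ‖μ ^ K * v i‖ = ‖μ‖ ^ K * ‖v i‖ := by
        rw [norm_mul, norm_pow]
      have h2 : (μ ^ K • v) i = μ ^ K * v i := rfl
      calc ‖μ‖ ^ K * ‖v i‖ = ‖(μ ^ K • v) i‖ := by rw [h2, h1]
        _ = ‖∑ j, ((M ^ K) i j : ℂ) * v j‖ := by
            rw [← hevK]; simp [Matrix.mulVec, dotProduct, Matrix.map_apply]
        _ ≤ ∑ j, ‖((M ^ K) i j : ℂ) * v j‖ := norm_sum_le _ _
        _ = ∑ j, (M ^ K) i j * ‖v j‖ := by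
            refine Finset.sum_congr rfl fun j _ => ?_
            rw [norm_mul, Complex.norm_real, Real.norm_of_nonneg (hpow_nonneg K i j)]
        _ ≤ ∑ j, (M ^ K) i j * ‖v i‖ :=
            Finset.sum_le_sum fun j _ =>
              mul_le_mul_of_nonneg_left (hi j (Finset.mem_univ j)) (hpow_nonneg K i j)
        _ = rs K i * ‖v i‖ := by rw [← Finset.sum_mul]
        _ ≤ c * ‖v i‖ := mul_le_mul_of_nonneg_right (hcle i) (le_of_lt hvi)
    exact le_of_mul_le_mul_right hbound hvi
  -- conclude
  set d : ℝ := c ^ ((K : ℝ)⁻¹) with hd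
  have hd0 : 0 ≤ d := Real.rpow_nonneg hc0 _
  have hd1 : d < 1 := Real.rpow_lt_one hc0 hc1 (by positivity)
  have hKR : (K : ℝ) ≠ 0 := Nat.cast_ne_zero.mpr hKne
  have hnorm_le : ∀ μ : ℂ, μ ∈ spectrum ℂ (M.map (algebraMap ℝ ℂ)) → ‖μ‖ ≤ d := by
    intro μ hμ
    have h := heig μ hμ
    have := Real.rpow_le_rpow (by positivity) h (by positivity : (0:ℝ) ≤ (K : ℝ)⁻¹)
    calc ‖μ‖ = (‖μ‖ ^ K) ^ ((K:ℝ)⁻¹) := by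
          rw [← Real.rpow_natCast ‖μ‖ K, ← Real.rpow_mul (norm_nonneg μ),
            mul_inv_cancel₀ hKR, Real.rpow_one]
      _ ≤ d := this
  have hlt : ((Real.toNNReal d : NNReal) : ENNReal) < 1 := by
    rw [← ENNReal.coe_one, ENNReal.coe_lt_coe]
    exact Real.toNNReal_lt_one.mpr hd1
  rw [specRad, spectralRadius]
  refine lt_of_le_of_lt (iSup₂_le fun μ hμ => ?_) hlt
  rw [ENNReal.coe_le_coe]
  exact (Real.le_toNNReal_iff_coe_le hd0).mpr (by simpa using hnorm_le μ hμ)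
end

section
/- Let M ∈ ℝ^{n×n}, let α^c ⊆ {1,…,n} with M[α^c] invertible, and suppose M·1_n = u with u[α^c] = 0 (the rows of M indexed by α^c have zero row sums). Then the Schur complement satisfies (M/α^c)·1_{|α|} = u[α], i.e. the row sums of the Schur complement equal the corresponding original row sums. -/
/-- The submatrix of `M` with rows indexed by `s` and columns indexed by `t`. -/
def subMat {n : ℕ} (M : Matrix (Fin n) (Fin n) ℝ) (s t : Finset (Fin n)) :
    Matrix s t ℝ :=
  M.submatrix (fun i => (i : Fin n)) (fun j => (j : Fin n))

/-- If `M · 1 = u` and the rows of `M` indexed by `αᶜ` have zero row sums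
(`u[αᶜ] = 0`), then the row sums of the Schur complement `M/αᶜ` equal the
corresponding row sums of `M`: `(M/αᶜ) · 1 = u[α]`. -/
theorem schur_complement_row_sums {n : ℕ} (M : Matrix (Fin n) (Fin n) ℝ)
    (α : Finset (Fin n))
    (hinv : IsUnit (subMat M αᶜ αᶜ))
    (u : Fin n → ℝ)
    (hu : M.mulVec (fun _ => 1) = u)
    (hzero : ∀ i ∈ (αᶜ : Finset (Fin n)), u i = 0) :
    (subMat M α α - subMat M α αᶜ * (subMat M αᶜ αᶜ)⁻¹ * subMat M αᶜ α).mulVec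
        (fun _ => 1) = fun i : α => u i := by
  have hdet : IsUnit (subMat M αᶜ αᶜ).det :=
    (Matrix.isUnit_iff_isUnit_det _).mp hinv
  -- row sums of M split
  have hsplit : ∀ i : Fin n,
      (∑ j : α, M i j) + (∑ j : {x // x ∈ (αᶜ : Finset (Fin n))}, M i j) = u i := by
    intro i
    have := congrFun hu i
    simp only [Matrix.mulVec, dotProduct, mul_one] at this
    rw [← this, ← Finset.sum_add_sum_compl α (fun j => M i j),
      ← Finset.sum_coe_sort α (fun j => M i j),
      ← Finset.sum_coe_sort (αᶜ : Finset (Fin n)) (fun j => M i j)]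
  -- the vector (subMat M αᶜ α) *ᵥ 1 = -(subMat M αᶜ αᶜ *ᵥ 1)
  have hv : (subMat M αᶜ α).mulVec (fun _ => 1)
      = -((subMat M αᶜ αᶜ).mulVec fun _ => 1) := by
    funext i
    have h0 : u (i : Fin n) = 0 := hzero _ i.2
    have h1 := hsplit (i : Fin n)
    rw [h0] at h1
    simp only [Matrix.mulVec, dotProduct, mul_one, Pi.neg_apply, subMat,
      Matrix.submatrix_apply]
    linarith
  have hBinv : (subMat M αᶜ αᶜ)⁻¹.mulVec ((subMat M αᶜ α).mulVec (fun _ => 1))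
      = -(fun _ => (1 : ℝ)) := by
    rw [hv, Matrix.mulVec_neg, Matrix.mulVec_mulVec, Matrix.nonsing_inv_mul _ hdet,
      Matrix.one_mulVec]
  funext i
  have hfin : ((subMat M α αᶜ * (subMat M αᶜ αᶜ)⁻¹ * subMat M αᶜ α).mulVec (fun _ => 1)) i
      = -(∑ j : {x // x ∈ (αᶜ : Finset (Fin n))}, M i j) := by
    rw [Matrix.mul_assoc, ← Matrix.mulVec_mulVec, ← Matrix.mulVec_mulVec, hBinv]
    simp [Matrix.mulVec, dotProduct, subMat]
  have h2 := hsplit (i : Fin n)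
  simp only [Matrix.sub_mulVec, Pi.sub_apply, hfin]
  have hA : (subMat M α α).mulVec (fun _ => 1) i = ∑ j : α, M i j := by
    simp [Matrix.mulVec, dotProduct, subMat]
  rw [hA]
  linarith
end

section
/- In a directed graph with a designated set S of stubborn nodes, if p is an LTP agent and q ∈ N_p (q is persuaded by p), then every in-neighbour of q belongs to N_p ∪ {p}. -/
/-- `l` is a directed path (a walk without repeated nodes) from `s` to `t` in the
digraph with edge relation `E`. -/
def IsPathList {V : Type*} (E : V → V → Prop) (s t : V) (l : List V) : Prop :=
  l.Chain' E ∧ l.head? = some s ∧ l.getLast? = some t ∧ l.Nodup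

/-- `q` is persuaded by `p`: `q` is a non-stubborn node distinct from `p` such that
every directed path from every stubborn node to `q` traverses `p`. -/
def Persuaded {V : Type*} (E : V → V → Prop) (S : Set V) (p q : V) : Prop :=
  q ∉ S ∧ q ≠ p ∧ ∀ s ∈ S, ∀ l : List V, IsPathList E s q l → p ∈ l

/-- `p` is a Locally Topologically Persuasive (LTP) agent: some non-stubborn node is
persuaded by `p`, and if `p` is non-stubborn then there is no node `c ≠ p` through
which every path from stubborn nodes to `p` passes. -/
def IsLTP {V : Type*} (E : V → V → Prop) (S : Set V) (p : V) : Prop :=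
  (∃ q, Persuaded E S p q) ∧
  (p ∉ S → ¬ ∃ c, c ≠ p ∧ ∀ s ∈ S, ∀ l : List V, IsPathList E s p l → c ∈ l)

/-! Any stubborn path to an in-neighbour `t` of `q`, extended by the edge `t → q` (or cut off at
`q` if it already visits `q`), yields a stubborn path to `q`; that one passes through `p ≠ q`, hence
so does the original. Applied to the one-node path `[t]`, this also shows that `t` is not stubborn. -/

namespace IsPathList

variable {V : Type*} {E : V → V → Prop} {s t q : V} {l : List V}

lemma singleton (s : V) : IsPathList E s s [s] :=
  ⟨List.isChain_singleton s, rfl, rfl, List.nodup_singleton s⟩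

lemma append_singleton (h : IsPathList E s t l) (ht : E t q) (hq : q ∉ l) :
    IsPathList E s q (l ++ [q]) := by
  obtain ⟨hc, hh, hl, hn⟩ := h
  refine ⟨?_, ?_, by simp, ?_⟩
  · refine List.isChain_append.mpr ⟨hc, List.isChain_singleton q, ?_⟩
    intro x hx y hy
    rw [hl, Option.mem_some_iff] at hx
    rw [List.head?_cons, Option.mem_some_iff] at hy
    exact hx ▸ hy ▸ ht
  · cases l with
    | nil => simp at hh
    | cons a l' => simpa using hh
  · exact hn.append (List.nodup_singleton q) (List.disjoint_singleton.mpr hq)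

lemma exists_prefix_of_mem (h : IsPathList E s t l) (hq : q ∈ l) :
    ∃ m, m <+: l ∧ IsPathList E s q m := by
  obtain ⟨hc, hh, -, hn⟩ := h
  obtain ⟨a, b, rfl⟩ := List.append_of_mem hq
  have hpre : a ++ [q] <+: a ++ q :: b := ⟨b, by simp⟩
  refine ⟨a ++ [q], hpre, hc.prefix hpre, ?_, by simp, hn.sublist hpre.sublist⟩
  cases a with
  | nil => simpa using hh
  | cons x a' => simpa using hh

lemma exists_subset_of_adj (h : IsPathList E s t l) (ht : E t q) :
    ∃ m, IsPathList E s q m ∧ m ⊆ l ++ [q] := by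
  by_cases hq : q ∈ l
  · obtain ⟨m, hm, hpath⟩ := h.exists_prefix_of_mem hq
    exact ⟨m, hpath, List.Subset.trans hm.subset (List.subset_append_left _ _)⟩
  · exact ⟨l ++ [q], h.append_singleton ht hq, List.Subset.refl _⟩

end IsPathList

lemma Persuaded.mem_of_isPathList_of_adj {V : Type*} {E : V → V → Prop} {S : Set V}
    {p q s t : V} {l : List V} (hq : Persuaded E S p q) (ht : E t q) (hs : s ∈ S)
    (hl : IsPathList E s t l) : p ∈ l := by
  obtain ⟨m, hm, hsub⟩ := hl.exists_subset_of_adj ht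
  have hpl : p ∈ l ++ [q] := hsub (hq.2.2 s hs m hm)
  simpa [Ne.symm hq.2.1] using hpl

theorem in_neighbour_of_persuaded_general {V : Type*} (E : V → V → Prop) (S : Set V)
    (p q : V) (hq : Persuaded E S p q)
    (t : V) (ht : E t q) :
    t = p ∨ Persuaded E S p t := by
  by_cases htp : t = p
  · exact Or.inl htp
  have htS : t ∉ S := fun htS =>
    htp (List.mem_singleton.mp (hq.mem_of_isPathList_of_adj ht htS (IsPathList.singleton t))).symm
  exact Or.inr ⟨htS, htp, fun s hs l hl => hq.mem_of_isPathList_of_adj ht hs hl⟩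

/-- If `p` is an LTP agent and `q ∈ N_p`, then every in-neighbour of `q` belongs
to `N_p ∪ {p}`. -/
theorem in_neighbour_of_persuaded {V : Type*} (E : V → V → Prop) (S : Set V)
    (hreach : ∀ v, v ∉ S → ∃ s ∈ S, ∃ l : List V, IsPathList E s v l)
    (p q : V) (hp : IsLTP E S p) (hq : Persuaded E S p q)
    (t : V) (ht : E t q) :
    t = p ∨ Persuaded E S p t :=
  in_neighbour_of_persuaded_general E S p q hq t ht
end

section
/- In a directed graph with stubborn node set S where every non-stubborn node is reachable from some stubborn node, if p and r are two distinct LTP agents, then their persuaded sets are disjoint: N_p ∩ N_r = ∅. -/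
lemma getLast?_cons_of_ne_nil' {V : Type*} (x : V) {w : List V} (hw : w ≠ []) :
    (x :: w).getLast? = w.getLast? := by
  cases w with
  | nil => simp at hw
  | cons a l => simp [List.getLast?_cons_cons]

lemma walk_to_path {V : Type*} (E : V → V → Prop) :
    ∀ w : List V, w.Chain' E → w ≠ [] →
    ∃ l : List V, l.Chain' E ∧ l.head? = w.head? ∧ l.getLast? = w.getLast? ∧
      l.Nodup ∧ ∀ x ∈ l, x ∈ w := by
  intro w
  induction w with
  | nil => simp
  | cons x w ih =>
    intro hc _
    rcases eq_or_ne w [] with rfl | hw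
    · exact ⟨[x], List.isChain_singleton x, rfl, rfl, by simp, by simp⟩
    · obtain ⟨l, hlc, hh, ht, hnd, hsub⟩ := ih hc.tail hw
      by_cases hx : x ∈ l
      · obtain ⟨u, v, rfl⟩ := List.append_of_mem hx
        refine ⟨x :: v, hlc.suffix ⟨u, rfl⟩, rfl, ?_, ?_, ?_⟩
        · rw [getLast?_cons_of_ne_nil' x hw, ← ht, List.getLast?_append]
          cases v with
          | nil => simp
          | cons a t =>
            obtain ⟨z, hz⟩ := Option.isSome_iff_exists.mp
              (List.getLast?_isSome.mpr (List.cons_ne_nil a t))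
            rw [getLast?_cons_of_ne_nil' x (List.cons_ne_nil a t), hz]
            simp
        · exact List.Nodup.cons
            (fun h => List.Nodup.notMem (List.nodup_middle.mp hnd) (List.mem_append_right _ h))
            ((List.nodup_middle.mp hnd).sublist
              (((List.sublist_append_right u v).cons x)))
        · intro y hy
          rcases List.mem_cons.mp hy with rfl | hy
          · exact List.mem_cons_self
          · exact List.mem_cons_of_mem _ (hsub y (by simp [hy]))
      · refine ⟨x :: l, List.isChain_cons.mpr ⟨?_, hlc⟩, rfl, ?_, hnd.cons hx, ?_⟩
        · intro y hy
          rw [hh] at hy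
          exact (List.isChain_cons.mp hc).1 y hy
        · have hl : l ≠ [] := by
            intro h; rw [h] at hh; exact (by simpa [hw] using hh.symm : False)
          rw [getLast?_cons_of_ne_nil' x hw, getLast?_cons_of_ne_nil' x hl, ht]
        · intro y hy
          rcases List.mem_cons.mp hy with rfl | hy
          · exact List.mem_cons_self
          · exact List.mem_cons_of_mem _ (hsub y hy)

/-- If `r ≠ p` lies on every path from stubborn nodes to `p`, `p` is not LTP. -/
lemma no_gate {V : Type*} (E : V → V → Prop) (S : Set V) (p r : V) (hp : IsLTP E S p) (hrp : r ≠ p)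
    (h : ∀ s ∈ S, ∀ l : List V, IsPathList E s p l → r ∈ l) : False := by
  by_cases hpS : p ∈ S
  · have hrl := h p hpS [p] ⟨List.isChain_singleton p, rfl, rfl, by simp⟩
    exact hrp (by simpa using hrl)
  · exact hp.2 hpS ⟨r, hrp, h⟩

/-- If some path `u ++ p :: v` from a stubborn node to `q` has `r` not in `p :: v`,
then every path from a stubborn node to `p` contains `r`. -/
lemma gate_of_after {V : Type*} (E : V → V → Prop) (S : Set V) (p r q : V) (hqp : q ≠ p) (s : V) (hs : s ∈ S) (u v : List V)
    (hl : IsPathList E s q (u ++ p :: v)) (hrv : r ∉ p :: v)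
    (hPr : ∀ s ∈ S, ∀ l : List V, IsPathList E s q l → r ∈ l) :
    ∀ s' ∈ S, ∀ l' : List V, IsPathList E s' p l' → r ∈ l' := by
  intro s' hs' l' hl'
  by_contra hr
  obtain ⟨hc, hh, ht, hnd⟩ := hl'
  obtain ⟨hcq, hhq, htq, hndq⟩ := hl
  have hv : v ≠ [] := by
    intro h
    subst h
    rw [List.getLast?_append] at htq
    simp at htq
    exact hqp htq.symm
  -- the walk l' ++ v goes from s' to q
  have hl'ne : l' ≠ [] := by intro h; rw [h] at hh; simp at hh
  have hcw : (l' ++ v).Chain' E := by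
    apply List.isChain_append.mpr
    refine ⟨hc, (hcq.suffix ⟨u, rfl⟩).tail, ?_⟩
    intro x hx y hy
    rw [ht] at hx
    simp at hx
    subst hx
    have := List.isChain_cons.mp (hcq.suffix ⟨u, rfl⟩)
    exact this.1 y hy
  have hhw : (l' ++ v).head? = some s' := by
    rw [List.head?_append_of_ne_nil _ hl'ne, hh]
  have htw : (l' ++ v).getLast? = some q := by
    rw [List.getLast?_append]
    rw [List.getLast?_append] at htq
    obtain ⟨z, hz⟩ := Option.isSome_iff_exists.mp (List.getLast?_isSome.mpr hv)
    rw [getLast?_cons_of_ne_nil' p hv] at htq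
    rw [hz] at htq ⊢
    simpa using htq
  obtain ⟨m, hmc, hmh, hmt, hmnd, hmsub⟩ := walk_to_path E (l' ++ v)
    hcw (by simp [hl'ne])
  have : r ∈ m := hPr s' hs' m ⟨hmc, by rw [hmh, hhw], by rw [hmt, htw], hmnd⟩
  rcases List.mem_append.mp (hmsub r this) with h | h
  · exact hr h
  · exact hrv (List.mem_cons_of_mem _ h)

/-- Two distinct LTP agents have disjoint persuaded sets: `N_p ∩ N_r = ∅`. -/
theorem persuaded_sets_disjoint {V : Type*} (E : V → V → Prop) (S : Set V)
    (hreach : ∀ v, v ∉ S → ∃ s ∈ S, ∃ l : List V, IsPathList E s v l)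
    (p r : V) (hp : IsLTP E S p) (hr : IsLTP E S r) (hpr : p ≠ r) :
    {q | Persuaded E S p q} ∩ {q | Persuaded E S r q} = ∅ := by
  ext q
  simp only [Set.mem_inter_iff, Set.mem_setOf_eq, Set.mem_empty_iff_false, iff_false]
  rintro ⟨⟨hqS, hqp, hPp⟩, ⟨_, hqr, hPr⟩⟩
  obtain ⟨s, hs, l, hl⟩ := hreach q hqS
  have hpl : p ∈ l := hPp s hs l hl
  have hrl : r ∈ l := hPr s hs l hl
  obtain ⟨u, v, rfl⟩ := List.append_of_mem hpl
  by_cases hrv : r ∈ v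
  · -- r after p : every path to r contains p
    obtain ⟨u2, v2, rfl⟩ := List.append_of_mem hrv
    have hl' : IsPathList E s q ((u ++ p :: u2) ++ r :: v2) := by
      simpa [List.append_assoc] using hl
    have hpnot : p ∉ r :: v2 := by
      intro h
      have hpm : p ∉ u ++ (u2 ++ r :: v2) := List.Nodup.notMem (List.nodup_middle.mp hl.2.2.2)
      rcases List.mem_cons.mp h with rfl | h
      · exact hpm (List.mem_append_right _ (List.mem_append_right _ List.mem_cons_self))
      · exact hpm (List.mem_append_right _ (List.mem_append_right _ (List.mem_cons_of_mem _ h)))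
    exact no_gate E S r p hr hpr
      (gate_of_after E S r p q hqr s hs (u ++ p :: u2) v2 hl' hpnot hPp)
  · -- r not after p : every path to p contains r
    have hrnot : r ∉ p :: v := by
      intro h
      rcases List.mem_cons.mp h with rfl | h
      · exact hpr rfl
      · exact hrv h
    exact no_gate E S p r hp (Ne.symm hpr)
      (gate_of_after E S p r q hqp s hs u v hl hrnot hPr)
end

section
/- If p is an LTP agent and q ∈ N_p, then any directed path from a node c ∉ N_p ∪ {p} to q must pass through p. -/
lemma not_nodup_split {V : Type*} : ∀ (l : List V), ¬ l.Nodup →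
    ∃ (v : V) (a b c : List V), l = (a ++ v :: b) ++ (v :: c) := by
  intro l
  induction l with
  | nil => intro h; exact absurd List.nodup_nil h
  | cons x xs ih =>
    intro h
    rw [List.nodup_cons] at h
    push_neg at h
    by_cases hx : x ∈ xs
    · obtain ⟨b, c, rfl⟩ := List.append_of_mem hx
      exact ⟨x, [], b, c, by simp⟩
    · obtain ⟨v, a, b, c, rfl⟩ := ih (h hx)
      exact ⟨v, x :: a, b, c, by simp⟩

lemma exists_path_of_walk {V : Type*} (E : V → V → Prop) :
    ∀ (n : ℕ) (l : List V), l.length ≤ n → l.Chain' E → ∀ s t, l.head? = some s →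
    l.getLast? = some t → ∃ l', l' ⊆ l ∧ IsPathList E s t l' := by
  intro n
  induction n with
  | zero =>
    intro l hl _ s t hs _
    rw [List.length_eq_zero_iff.mp (Nat.le_zero.mp hl)] at hs
    simp at hs
  | succ n ih =>
    intro l hl hch s t hs ht
    by_cases hnd : l.Nodup
    · exact ⟨l, fun _ h => h, hch, hs, ht, hnd⟩
    · obtain ⟨v, a, b, c, rfl⟩ := not_nodup_split l hnd
      have hsub : (a ++ v :: c) ⊆ ((a ++ v :: b) ++ (v :: c)) := by
        intro x hx
        simp only [List.mem_append, List.mem_cons] at hx ⊢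
        tauto
      have hlen : (a ++ v :: c).length ≤ n := by
        simp only [List.length_append, List.length_cons] at hl ⊢
        omega
      rw [List.Chain', List.isChain_append] at hch
      obtain ⟨hca, hcvc, hlink⟩ := hch
      have hca' : List.Chain' E a ∧ ∀ x ∈ a.getLast?, E x v := by
        rw [show a ++ v :: b = a ++ (v :: b) from rfl, List.isChain_append] at hca
        exact ⟨hca.1, fun x hx => hca.2.2 x hx v rfl⟩
      have hch' : (a ++ v :: c).Chain' E := by
        rw [show a ++ v :: c = a ++ (v :: c) from rfl, List.Chain', List.isChain_append]
        exact ⟨hca'.1, hcvc, fun x hx y hy => by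
          simp only [List.head?_cons, Option.mem_def, Option.some.injEq] at hy
          subst hy; exact hca'.2 x hx⟩
      have hhead : (a ++ v :: c).head? = some s := by
        cases a with
        | nil => simpa using hs
        | cons x xs => simpa using hs
      have hlast : (a ++ v :: c).getLast? = some t := by
        rw [List.getLast?_append_of_ne_nil _ (l₂ := v :: c) (by simp)] at ht ⊢
        exact ht
      obtain ⟨l', hl', hpath⟩ := ih (a ++ v :: c) hlen hch' s t hhead hlast
      exact ⟨l', fun x hx => hsub (hl' hx), hpath⟩

/-- If `p` is an LTP agent and `q ∈ N_p`, then any directed path from a node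
`c ∉ N_p ∪ {p}` to `q` must pass through `p`. -/
theorem path_from_outside_passes_through {V : Type*} (E : V → V → Prop) (S : Set V)
    (hreach : ∀ v, v ∉ S → ∃ s ∈ S, ∃ l : List V, IsPathList E s v l)
    (p q : V) (hp : IsLTP E S p) (hq : Persuaded E S p q)
    (c : V) (hc : ¬ (c = p ∨ Persuaded E S p c)) :
    ∀ l : List V, IsPathList E c q l → p ∈ l := by
  push_neg at hc
  obtain ⟨hcp, hcnp⟩ := hc
  intro l hl
  by_contra hpl
  by_cases hcS : c ∈ S
  · exact hpl (hq.2.2 c hcS l hl)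
  · have hex : ∃ s ∈ S, ∃ l₀, IsPathList E s c l₀ ∧ p ∉ l₀ := by
      by_contra h
      push_neg at h
      exact hcnp ⟨hcS, hcp, fun s hs l₀ hl₀ => h s hs l₀ hl₀⟩
    obtain ⟨s, hs, l₀, hl₀, hpl₀⟩ := hex
    obtain ⟨hch, hhd, hlast, hnd⟩ := hl
    -- l = c :: tl
    obtain ⟨tl, rfl⟩ : ∃ tl, l = c :: tl := by
      cases l with
      | nil => simp at hhd
      | cons x xs => simp only [List.head?_cons, Option.some.injEq] at hhd; exact ⟨xs, by rw [hhd]⟩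
    rw [List.Chain', List.isChain_cons] at hch
    have hl₀ne : l₀ ≠ [] := by
      rintro rfl; simp [IsPathList] at hl₀
    -- the walk from s to q avoiding p
    have hwch : (l₀ ++ tl).Chain' E := by
      rw [List.Chain', List.isChain_append]
      refine ⟨hl₀.1, hch.2, fun x hx y hy => ?_⟩
      have : x = c := by
        have := hl₀.2.2.1
        rw [Option.mem_def, this, Option.some.injEq] at hx
        exact hx.symm
      subst this
      exact hch.1 y hy
    have hwhd : (l₀ ++ tl).head? = some s := by
      rw [List.head?_append_of_ne_nil _ hl₀ne]
      exact hl₀.2.1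
    have hwlast : (l₀ ++ tl).getLast? = some q := by
      cases tl with
      | nil =>
        simp only [List.getLast?_singleton, Option.some.injEq] at hlast
        simpa [hlast] using hl₀.2.2.1
      | cons y ys =>
        rw [List.getLast?_append_of_ne_nil _ (by simp)]
        rw [List.getLast?_cons_cons] at hlast
        exact hlast
    obtain ⟨l', hl'sub, hl'path⟩ := exists_path_of_walk E (l₀ ++ tl).length (l₀ ++ tl)
      le_rfl hwch s q hwhd hwlast
    have hpmem : p ∈ l₀ ++ tl := hl'sub (hq.2.2 s hs l' hl'path)
    rw [List.mem_append] at hpmem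
    rcases hpmem with h | h
    · exact hpl₀ h
    · exact hpl (List.mem_cons_of_mem _ h)
end

section
/- Let p be an LTP agent in a signed digraph satisfying the reachability assumption, q ∈ N_p, and let α^c = N_p \ {q}. Then the submatrix W[α^c] of the row-normalized signed weight matrix W satisfies ρ(W[α^c]) < 1, so I − W[α^c] is invertible with inverse ∑_{k=0}^∞ W[α^c]^k. -/
/-- From a chain ending in `α` and containing a point outside `α`, extract a
nonempty suffix entirely inside `α`, preceded by a point outside `α`. -/
lemma exists_suffix_in {V : Type*} {E : V → V → Prop} {α : Set V} :
    ∀ (l : List V), l.Chain' E → ∀ i, l.getLast? = some i → i ∈ α →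
      (∃ x ∈ l, x ∉ α) →
      ∃ u l', u ∉ α ∧ (∀ x ∈ l', x ∈ α) ∧ (u :: l').Chain' E ∧
        l'.getLast? = some i ∧ l' ≠ [] := by
  intro l
  induction l with
  | nil => intro _ i hl _ hx; simp at hx
  | cons a t ih =>
    intro hc i hl hi hx
    rcases eq_or_ne t [] with rfl | ht
    · simp at hl
      subst hl
      obtain ⟨x, hxmem, hxna⟩ := hx
      simp at hxmem
      subst hxmem
      exact absurd hi hxna
    · by_cases hall : ∀ x ∈ t, x ∈ α
      · -- the head `a` must be outside α
        obtain ⟨x, hxmem, hxna⟩ := hx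
        have hax : a ∉ α := by
          rcases List.mem_cons.mp hxmem with rfl | hxt
          · exact hxna
          · exact absurd (hall x hxt) hxna
        obtain ⟨b, t', rfl⟩ := List.exists_cons_of_ne_nil ht
        refine ⟨a, b :: t', hax, hall, hc, ?_, by simp⟩
        rwa [List.getLast?_cons_cons] at hl
      · push_neg at hall
        obtain ⟨b, t', rfl⟩ := List.exists_cons_of_ne_nil ht
        exact ih (hc.tail) i (by rwa [List.getLast?_cons_cons] at hl) hi hall

/-- Propagate a "good" predicate backwards along a chain. -/
lemma good_head_of_chain {V : Type*} {R : V → V → Prop} {Good : V → Prop}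
    (hstep : ∀ a b, R a b → Good b → Good a) :
    ∀ (l : List V) (w : V), (w :: l).Chain' R → ∀ i, (w :: l).getLast? = some i →
      Good i → Good w := by
  intro l
  induction l with
  | nil => intro w _ i hl hg; simp at hl; subst hl; exact hg
  | cons y t ih =>
    intro w hc i hl hg
    have h1 : R w y := List.isChain_cons_cons.mp hc |>.1
    have h2 : (y :: t).Chain' R := List.isChain_cons_cons.mp hc |>.2
    have h3 : (y :: t).getLast? = some i := by
      rwa [List.getLast?_cons_cons] at hl
    exact hstep w y h1 (ih y h2 i h3 hg)

section SpecAux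

attribute [local instance] Matrix.linftyOpNormedAddCommGroup Matrix.linftyOpNormedRing
  Matrix.linftyOpNormedAlgebra

lemma specRad_lt_one_aux {m : Type*} [Fintype m] [DecidableEq m]
    (M : Matrix m m ℝ)
    (hrow : ∀ i, ∑ j, |M i j| ≤ 1)
    (hreach : ∀ i : m, ∃ (w : m) (l : List m),
        (w :: l).Chain' (fun a b => M b a ≠ 0) ∧ (w :: l).getLast? = some i ∧
        ∑ j, |M w j| < 1) :
    spectralRadius ℂ (M.map (algebraMap ℝ ℂ)) < 1 := by
  set A : Matrix m m ℂ := M.map (algebraMap ℝ ℂ) with hA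
  have hAij : ∀ i j, ‖A i j‖ = |M i j| := by
    intro i j
    simp [hA, Matrix.map_apply, Complex.norm_real, Real.norm_eq_abs]
  -- every element of the spectrum has norm < 1
  have key : ∀ μ ∈ spectrum ℂ A, (‖μ‖₊ : ENNReal) < 1 := by
    intro μ hμ
    by_contra hge
    push_neg at hge
    have hμ1 : (1 : ℝ) ≤ ‖μ‖ := by
      have := ENNReal.one_le_coe_iff.mp hge
      exact_mod_cast this
    -- extract an eigenvector
    have hdet : (algebraMap ℂ (Matrix m m ℂ) μ - A).det = 0 := by
      by_contra hd
      exact (spectrum.mem_iff.mp hμ)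
        ((Matrix.isUnit_iff_isUnit_det _).mpr (isUnit_iff_ne_zero.mpr hd))
    obtain ⟨v, hv0, hv⟩ := Matrix.exists_mulVec_eq_zero_iff.mpr hdet
    have heig : ∀ i, ∑ j, A i j * v j = μ * v i := by
      intro i
      have h1 := congrFun hv i
      have h2 : (algebraMap ℂ (Matrix m m ℂ) μ - A).mulVec v i
          = μ * v i - ∑ j, A i j * v j := by
        rw [Matrix.sub_mulVec]
        simp [Algebra.algebraMap_eq_smul_one, Matrix.smul_mulVec,
          Matrix.one_mulVec, Matrix.mulVec, dotProduct]
      exact (sub_eq_zero.mp (by simpa using h2.symm.trans h1)).symm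
    -- an index of maximal modulus
    obtain ⟨j0, hj0⟩ := Function.ne_iff.mp hv0
    obtain ⟨i0, -, hi0⟩ := Finset.exists_max_image Finset.univ (fun i => ‖v i‖)
      ⟨j0, Finset.mem_univ j0⟩
    set mx : ℝ := ‖v i0‖ with hmx
    have hmxpos : 0 < mx := lt_of_lt_of_le (norm_pos_iff.mpr hj0)
      (hi0 j0 (Finset.mem_univ j0))
    have hle : ∀ j, ‖v j‖ ≤ mx := fun j => hi0 j (Finset.mem_univ j)
    -- key pointwise fact at indices of maximal modulus
    have key2 : ∀ i, ‖v i‖ = mx →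
        (∑ j, |M i j| = 1) ∧ ∀ j, M i j ≠ 0 → ‖v j‖ = mx := by
      intro i hi
      have h1 : mx ≤ ∑ j, ‖A i j‖ * ‖v j‖ := by
        calc mx = ‖v i‖ := hi.symm
          _ ≤ ‖μ‖ * ‖v i‖ := le_mul_of_one_le_left (norm_nonneg _) hμ1
          _ = ‖μ * v i‖ := (norm_mul _ _).symm
          _ = ‖∑ j, A i j * v j‖ := by rw [heig i]
          _ ≤ ∑ j, ‖A i j * v j‖ := norm_sum_le _ _
          _ = ∑ j, ‖A i j‖ * ‖v j‖ := by simp [norm_mul]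
      have h2 : ∑ j, ‖A i j‖ * ‖v j‖ ≤ ∑ j, |M i j| * mx := by
        refine Finset.sum_le_sum fun j _ => ?_
        rw [hAij]
        exact mul_le_mul_of_nonneg_left (hle j) (abs_nonneg _)
      have h3 : ∑ j, |M i j| * mx ≤ mx := by
        rw [← Finset.sum_mul]
        calc (∑ j, |M i j|) * mx ≤ 1 * mx :=
          mul_le_mul_of_nonneg_right (hrow i) hmxpos.le
          _ = mx := one_mul mx
      have e2 : ∑ j, |M i j| * mx = mx := le_antisymm h3 (h1.trans h2)
      have hrow1 : ∑ j, |M i j| = 1 := by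
        have : (∑ j, |M i j|) * mx = 1 * mx := by
          rw [Finset.sum_mul, e2, one_mul]
        exact mul_right_cancel₀ hmxpos.ne' this
      refine ⟨hrow1, ?_⟩
      have e3 : ∑ j, ‖A i j‖ * ‖v j‖ = ∑ j, |M i j| * mx :=
        le_antisymm h2 (e2.symm ▸ h1 : ∑ j, |M i j| * mx ≤ _)
      have e4 : ∑ j, |M i j| * (mx - ‖v j‖) = 0 := by
        have : ∑ j, (|M i j| * mx - |M i j| * ‖v j‖) = 0 := by
          rw [Finset.sum_sub_distrib]
          have : ∑ j, |M i j| * ‖v j‖ = ∑ j, ‖A i j‖ * ‖v j‖ := by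
            refine Finset.sum_congr rfl fun j _ => by rw [hAij]
          rw [this, e3, sub_self]
        simpa [mul_sub] using this
      intro j hj
      have hnn : ∀ k ∈ Finset.univ, 0 ≤ |M i k| * (mx - ‖v k‖) :=
        fun k _ => mul_nonneg (abs_nonneg _) (sub_nonneg.mpr (hle k))
      have := (Finset.sum_eq_zero_iff_of_nonneg hnn).mp e4 j (Finset.mem_univ j)
      rcases mul_eq_zero.mp this with h | h
      · exact absurd (abs_eq_zero.mp h) hj
      · linarith [sub_eq_zero.mp h]
    -- propagate along a chain to a deficient row: contradiction
    obtain ⟨w, l, hchain, hlast, hdef⟩ := hreach i0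
    have hgw : ‖v w‖ = mx :=
      good_head_of_chain (fun a b hab hgb => (key2 b hgb).2 a hab) l w hchain i0 hlast rfl
    exact absurd ((key2 w hgw).1) (ne_of_lt hdef)
  -- conclude via finiteness of the spectrum
  have hfin := Matrix.finite_spectrum (R := ℂ) A
  rw [spectralRadius, show spectrum ℂ A = ↑hfin.toFinset by simp]
  have : ⨆ k ∈ (↑hfin.toFinset : Set ℂ), (‖k‖₊ : ENNReal)
      = hfin.toFinset.sup fun k => (‖k‖₊ : ENNReal) := by
    rw [Finset.sup_eq_iSup]
    exact iSup_congr fun k => by rw [Finset.mem_coe]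
  rw [this]
  rw [Finset.sup_lt_iff (by norm_num : (⊥ : ENNReal) < 1)]
  intro b hb
  exact key b (hfin.mem_toFinset.mp hb)

end SpecAux

section NeumannAux

attribute [local instance] Matrix.linftyOpNormedAddCommGroup Matrix.linftyOpNormedRing
  Matrix.linftyOpNormedAlgebra

open Filter

lemma nnnorm_map_complex {m : Type*} [Fintype m] [DecidableEq m] (N : Matrix m m ℝ) :
    ‖N.map (algebraMap ℝ ℂ)‖₊ = ‖N‖₊ := by
  rw [Matrix.linfty_opNNNorm_def, Matrix.linfty_opNNNorm_def]
  refine congrArg _ (funext fun i => Finset.sum_congr rfl fun j _ => ?_)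
  simp [Matrix.map_apply]

lemma neumann_aux {m : Type*} [Fintype m] [DecidableEq m] (M : Matrix m m ℝ)
    (h : spectralRadius ℂ (M.map (algebraMap ℝ ℂ)) < 1) :
    IsUnit (1 - M) ∧ (1 - M)⁻¹ = ∑' k : ℕ, M ^ k := by
  set A : Matrix m m ℂ := M.map (algebraMap ℝ ℂ) with hA
  -- powers commute with `map`
  have hpow : ∀ k : ℕ, A ^ k = (M ^ k).map (algebraMap ℝ ℂ) := by
    intro k
    rw [hA, ← RingHom.mapMatrix_apply, ← RingHom.mapMatrix_apply, map_pow]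
  obtain ⟨c, hc1, hc2⟩ := ENNReal.lt_iff_exists_nnreal_btwn.mp h
  have hc2' : c < 1 := by exact_mod_cast hc2
  have hgel := spectrum.pow_nnnorm_pow_one_div_tendsto_nhds_spectralRadius A
  have hev : ∀ᶠ k : ℕ in atTop, (‖A ^ k‖₊ : ENNReal) ^ (1 / (k : ℝ)) < (c : ENNReal) :=
    hgel.eventually_lt_const hc1
  have hev2 : ∀ᶠ k : ℕ in atTop, ‖M ^ k‖ ≤ (c : ℝ) ^ k := by
    filter_upwards [hev, eventually_ge_atTop 1] with k hk hk1
    have hk0 : (k : ℝ) ≠ 0 := by positivity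
    have : ((‖A ^ k‖₊ : ENNReal) ^ (1 / (k : ℝ))) ^ (k : ℝ) < (c : ENNReal) ^ (k : ℝ) := by
      refine ENNReal.rpow_lt_rpow hk ?_
      positivity
    rw [← ENNReal.rpow_mul, one_div, inv_mul_cancel₀ hk0, ENNReal.rpow_one] at this
    have hlt : ‖A ^ k‖₊ < c ^ (k : ℝ) := by
      rw [← ENNReal.coe_rpow_of_nonneg _ (by positivity)] at this
      exact_mod_cast this
    have h2 : ‖M ^ k‖₊ ≤ c ^ k := by
      rw [← nnnorm_map_complex (M ^ k), ← hpow]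
      calc ‖A ^ k‖₊ ≤ c ^ (k : ℝ) := hlt.le
        _ = c ^ k := by rw [NNReal.rpow_natCast]
    calc ‖M ^ k‖ = ((‖M ^ k‖₊ : NNReal) : ℝ) := (coe_nnnorm _).symm
      _ ≤ ((c ^ k : NNReal) : ℝ) := NNReal.coe_le_coe.mpr h2
      _ = (c : ℝ) ^ k := by push_cast; ring
  -- summability of the geometric series
  have hsum : Summable (fun k : ℕ => M ^ k) := by
    refine Summable.of_norm_bounded_eventually_nat ?_ hev2
    exact summable_geometric_of_lt_one (by positivity) hc2'
  -- telescoping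
  have hshift : ∑' k : ℕ, M ^ (k + 1) = (∑' k : ℕ, M ^ k) - 1 := by
    have := Summable.tsum_eq_zero_add hsum
    rw [pow_zero] at this
    rw [eq_sub_iff_add_eq, add_comm, ← this]
  have hmulL : (1 - M) * (∑' k : ℕ, M ^ k) = 1 := by
    have h1 : M * (∑' k : ℕ, M ^ k) = ∑' k : ℕ, M ^ (k + 1) := by
      rw [← Summable.tsum_mul_left M hsum]
      exact tsum_congr fun k => (pow_succ' M k).symm
    rw [sub_mul, one_mul, h1, hshift]
    abel
  have hmulR : (∑' k : ℕ, M ^ k) * (1 - M) = 1 := by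
    have h1 : (∑' k : ℕ, M ^ k) * M = ∑' k : ℕ, M ^ (k + 1) := by
      rw [← Summable.tsum_mul_right M hsum]
      exact tsum_congr fun k => (pow_succ M k).symm
    rw [mul_sub, mul_one, h1, hshift]
    abel
  refine ⟨⟨⟨1 - M, ∑' k : ℕ, M ^ k, hmulL, hmulR⟩, rfl⟩, ?_⟩
  exact Matrix.inv_eq_right_inv hmulL

end NeumannAux

/-- Let `p` be an LTP agent of the signed digraph of `W` (edge `(j,i)` iff
`W i j ≠ 0`), with stubborn set `S = {i | β i > 0}`, and suppose every
non-stubborn agent has a path from a stubborn one. For `q ∈ N_p` and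
`αᶜ = N_p \ {q}`, the submatrix `W[αᶜ]` satisfies `ρ(W[αᶜ]) < 1`, so
`I - W[αᶜ]` is invertible with inverse `∑ₖ W[αᶜ]^k`. -/
theorem specRad_submatrix_persuaded_lt_one {n : ℕ}
    (W : Matrix (Fin n) (Fin n) ℝ) (β : Fin n → ℝ) (E : Fin n → Fin n → Prop)
    (S : Set (Fin n))
    (hE : ∀ i j, E j i ↔ W i j ≠ 0)
    (hS : ∀ i, i ∈ S ↔ 0 < β i)
    (hβ : ∀ i, β i ∈ Set.Icc (0 : ℝ) 1)
    (hW : ∀ i, ∑ j, |W i j| = 1)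
    (hreach : ∀ v, v ∉ S → ∃ s ∈ S, ∃ l : List (Fin n), IsPathList E s v l)
    (p q : Fin n) (hp : IsLTP E S p) (hq : Persuaded E S p q)
    (αc : Finset (Fin n)) (hαc : ∀ i, i ∈ αc ↔ Persuaded E S p i ∧ i ≠ q)
    (Wc : Matrix αc αc ℝ)
    (hWc : Wc = W.submatrix (fun i : αc => (i : Fin n)) (fun j : αc => (j : Fin n))) :
    specRad Wc < 1 ∧ IsUnit (1 - Wc) ∧ (1 - Wc)⁻¹ = ∑' k : ℕ, Wc ^ k := by
  classical
  have hsub : ∀ (i : αc) (j : αc), Wc i j = W i j := by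
    intro i j; rw [hWc]; simp [Matrix.submatrix_apply]
  have habs : ∀ (w : αc), ∀ u : Fin n, u ∉ αc → W w u ≠ 0 →
      ∑ j : αc, |Wc w j| < 1 := by
    intro w u hu hWu
    have h1 : ∑ j : αc, |Wc w j| = ∑ j ∈ αc, |W (w : Fin n) j| := by
      rw [show (fun j : αc => |Wc w j|) = fun j : αc => |W (w : Fin n) (j : Fin n)|
        from funext fun j => by rw [hsub]]
      exact Finset.sum_coe_sort αc (fun j => |W (w : Fin n) j|)
    have h2 : ∑ j ∈ insert u αc, |W (w : Fin n) j| ≤ 1 := by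
      rw [← hW (w : Fin n)]
      exact Finset.sum_le_sum_of_subset_of_nonneg (Finset.subset_univ _)
        (fun k _ _ => abs_nonneg _)
    rw [Finset.sum_insert hu] at h2
    have : 0 < |W (w : Fin n) u| := abs_pos.mpr hWu
    rw [h1]; linarith
  have hrow : ∀ i : αc, ∑ j : αc, |Wc i j| ≤ 1 := by
    intro i
    have h1 : ∑ j : αc, |Wc i j| = ∑ j ∈ αc, |W (i : Fin n) j| := by
      rw [show (fun j : αc => |Wc i j|) = fun j : αc => |W (i : Fin n) (j : Fin n)|
        from funext fun j => by rw [hsub]]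
      exact Finset.sum_coe_sort αc (fun j => |W (i : Fin n) j|)
    rw [h1, ← hW (i : Fin n)]
    exact Finset.sum_le_sum_of_subset_of_nonneg (Finset.subset_univ _)
      (fun k _ _ => abs_nonneg _)
  have hreachc : ∀ i : αc, ∃ (w : αc) (l : List αc),
      (w :: l).Chain' (fun a b => Wc b a ≠ 0) ∧ (w :: l).getLast? = some i ∧
      ∑ j : αc, |Wc w j| < 1 := by
    intro i
    have hiP : Persuaded E S p (i : Fin n) := ((hαc i).mp i.2).1
    obtain ⟨s, hsS, l, hchain, hhead, hlast, -⟩ := hreach (i : Fin n) hiP.1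
    have hsmem : s ∈ l := List.mem_of_mem_head? (Option.mem_def.mpr hhead)
    have hsnot : s ∉ αc := fun hs => ((hαc s).mp hs).1.1 hsS
    obtain ⟨u, l', hu, hall, hchain', hlast', hne⟩ :=
      exists_suffix_in (α := {x | x ∈ αc}) l hchain (i : Fin n) hlast i.2
        ⟨s, hsmem, hsnot⟩
    obtain ⟨w, t, rfl⟩ := List.exists_cons_of_ne_nil hne
    have hEuw : E u w := (List.isChain_cons_cons.mp hchain').1
    have hWwu : W w u ≠ 0 := (hE w u).mp hEuw
    have hwmem : w ∈ αc := hall w List.mem_cons_self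
    set L : List αc := (w :: t).attachWith (· ∈ αc) hall with hL
    have hmap : L.map Subtype.val = w :: t := List.attachWith_map_subtype_val _
    obtain ⟨w', t', hL'⟩ : ∃ w' t', L = w' :: t' := by
      cases hLc : L with
      | nil => rw [hLc] at hmap; simp at hmap
      | cons a b => exact ⟨a, b, rfl⟩
    have hw' : (w' : Fin n) = w := by
      rw [hL'] at hmap; exact (List.cons.injEq _ _ _ _).mp hmap |>.1
    refine ⟨w', t', ?_, ?_, ?_⟩
    · have h1 : (L.map Subtype.val).Chain' E := by
        rw [hmap]; exact (List.isChain_cons_cons.mp hchain').2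
      have h2 := (List.isChain_map (Subtype.val (p := (· ∈ αc)))).mp h1
      rw [hL'] at h2
      exact List.IsChain.imp
        (fun a b hab => show Wc b a ≠ 0 by rw [hsub]; exact (hE _ _).mp hab) h2
    · have h1 : (L.map Subtype.val).getLast? = some (i : Fin n) := by
        rw [hmap]; exact hlast'
      rw [List.getLast?_map] at h1
      cases hLl : L.getLast? with
      | none => rw [hLl] at h1; simp at h1
      | some x =>
        rw [hLl] at h1
        simp only [Option.map_some] at h1
        have : x = i := Subtype.ext (Option.some.injEq _ _ ▸ (by simpa using h1))
        rw [← hL', hLl, this]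
    · exact habs w' u hu (by rw [hw']; exact hWwu)
  have hs : spectralRadius ℂ (Wc.map (algebraMap ℝ ℂ)) < 1 :=
    specRad_lt_one_aux Wc hrow hreachc
  have hn := neumann_aux Wc hs
  exact ⟨hs, hn.1, hn.2⟩
end

section
/- Let a signed digraph with m > 1 stubborn agents satisfy: (i) every non-stubborn agent has a path from a stubborn agent; (ii) there are z LTP agents p_1,…,p_z whose singleton sets together with persuaded sets N_{p_1},…,N_{p_z} cover all nodes; (iii) every incoming edge at every node in each N_{p_j} is cooperative. Then the signed Friedkin-Johnsen dynamics achieves multiconsensus: for each j, all agents in {p_j} ∪ N_{p_j} converge to a common limit, for any initial condition. -/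
namespace SFJaux

variable {V : Type*} {E : V → V → Prop}

/-- prefix of a path up to an occurrence of `q` (with `q ∉` the prefix) is a path. -/
lemma path_prefix {s t q : V} {l l₁ l₂ : List V} (hl : IsPathList E s t l)
    (hdec : l = l₁ ++ q :: l₂) : IsPathList E s q (l₁ ++ [q]) := by
  obtain ⟨hc, hh, hg, hn⟩ := hl
  subst hdec
  have hpre : (l₁ ++ [q]) <+: l₁ ++ q :: l₂ := ⟨l₂, by simp⟩
  refine ⟨hc.prefix hpre, ?_, ?_, hn.sublist hpre.sublist⟩
  · rw [← hh]; simp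
  · simp

/-- suffix of a path from an occurrence of `q` is a path. -/
lemma path_suffix {s t q : V} {l l₁ l₂ : List V} (hl : IsPathList E s t l)
    (hdec : l = l₁ ++ q :: l₂) : IsPathList E q t (q :: l₂) := by
  obtain ⟨hc, hh, hg, hn⟩ := hl
  subst hdec
  have hsuf : (q :: l₂) <:+ l₁ ++ q :: l₂ := ⟨l₁, rfl⟩
  refine ⟨hc.suffix hsuf, by simp, ?_, hn.sublist hsuf.sublist⟩
  · rw [← hg, List.getLast?_append,
      Option.or_of_isSome (by simp [List.getLast?_isSome])]

/-- extending a path by one new vertex. -/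
lemma path_concat {s v q : V} {l : List V} (hl : IsPathList E s v l)
    (he : E v q) (hq : q ∉ l) : IsPathList E s q (l ++ [q]) := by
  obtain ⟨hc, hh, hg, hn⟩ := hl
  refine ⟨?_, ?_, by simp, ?_⟩
  · refine List.IsChain.append hc (List.isChain_singleton q) ?_
    intro x hx y hy
    rw [hg] at hx; rw [List.head?_cons] at hy
    cases hx; cases hy; exact he
  · have : l ≠ [] := by rintro rfl; simp at hh
    rw [← hh]; simp [List.head?_append_of_ne_nil _ this]
  · simp [List.nodup_append, hn, hq]
    exact fun a ha h => hq (h ▸ ha)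

/-- every chain (walk) from `s` to `t` contains a path from `s` to `t` whose
vertices are among the walk's vertices. -/
lemma exists_path_of_chain_aux : ∀ (N : ℕ) (l : List V) (s t : V), l.length ≤ N →
    l.Chain' E → l.head? = some s → l.getLast? = some t →
    ∃ l', IsPathList E s t l' ∧ ∀ v ∈ l', v ∈ l := by
  intro N
  induction N with
  | zero =>
    intro l s t hlen _ hh _
    rw [Nat.le_zero, List.length_eq_zero_iff] at hlen
    subst hlen; simp at hh
  | succ N ih =>
    intro l s t hlen hc hh hg
    by_cases hnd : l.Nodup
    · exact ⟨l, ⟨hc, hh, hg, hnd⟩, fun v hv => hv⟩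
    · match l, hh with
      | h :: tl, hh =>
        have hs : h = s := by simpa using hh
        subst hs
        rcases List.eq_nil_or_concat tl with rfl | _
        · simp at hnd
        by_cases hmem : h ∈ tl
        · obtain ⟨t₁, t₂, rfl⟩ := List.append_of_mem hmem
          have hsuf : (h :: t₂) <:+ h :: t₁ ++ h :: t₂ := ⟨h :: t₁, rfl⟩
          have hlen2 : (h :: t₂).length ≤ N := by
            simp only [List.length_cons, List.length_append] at hlen ⊢; omega
          have hg2 : (h :: t₂).getLast? = some t := by
            rw [← hg]
            show _ = ((h :: t₁) ++ (h :: t₂)).getLast?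
            rw [List.getLast?_append,
              Option.or_of_isSome (by simp [List.getLast?_isSome])]
          obtain ⟨l', hl', hsub⟩ := ih (h :: t₂) h t hlen2 (hc.suffix hsuf) rfl hg2
          exact ⟨l', hl', fun v hv => hsuf.subset (hsub v hv)⟩
        · have htl : tl ≠ [] := by rintro rfl; simp at hnd
          obtain ⟨s', hs'⟩ := Option.isSome_iff_exists.mp
            ((List.isSome_head?).mpr htl)
          have hc' : tl.Chain' E ∧ E h s' := by
            unfold List.Chain' at hc
            rw [List.isChain_cons] at hc
            exact ⟨hc.2, hc.1 s' hs'⟩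
          have hg' : tl.getLast? = some t := by
            rw [← hg]
            show _ = ([h] ++ tl).getLast?
            rw [List.getLast?_append,
              Option.or_of_isSome (by simp [List.getLast?_isSome, htl])]
          obtain ⟨l', ⟨hc2, hh2, hg2, hn2⟩, hsub⟩ :=
            ih tl s' t (by simpa using hlen) hc'.1 hs' hg'
          have hl'nil : l' ≠ [] := by rintro rfl; simp at hh2
          refine ⟨h :: l', ⟨?_, rfl, ?_, ?_⟩, ?_⟩
          · unfold List.Chain'
            rw [List.isChain_cons]
            refine ⟨fun y hy => ?_, hc2⟩
            rw [hh2] at hy; cases hy; exact hc'.2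
          · rw [← hg2]
            show ([h] ++ l').getLast? = _
            rw [List.getLast?_append,
              Option.or_of_isSome (by simp [List.getLast?_isSome, hl'nil])]
          · exact List.nodup_cons.mpr ⟨fun hmem2 => hmem (hsub h hmem2), hn2⟩
          · intro v hv
            rcases List.mem_cons.mp hv with rfl | hv
            · exact List.mem_cons_self
            · exact List.mem_cons_of_mem _ (hsub v hv)

lemma exists_path_of_chain (l : List V) (s t : V) (hc : l.Chain' E)
    (hh : l.head? = some s) (hg : l.getLast? = some t) :
    ∃ l', IsPathList E s t l' ∧ ∀ v ∈ l', v ∈ l :=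
  exists_path_of_chain_aux l.length l s t le_rfl hc hh hg

variable {S : Set V}

/-- an in-neighbor of a persuaded node lies in the same cluster (or is the node itself). -/
lemma persuaded_in_nbr {pj q i : V} (hq : Persuaded E S pj q)
    (he : E i q) (hiq : i ≠ q) : i = pj ∨ Persuaded E S pj i := by
  by_cases hip : i = pj
  · exact Or.inl hip
  right
  obtain ⟨hqS, hqp, hq3⟩ := hq
  have hiS : i ∉ S := by
    intro hiS
    have hpath : IsPathList E i q [i, q] := by
      refine ⟨?_, rfl, rfl, by simp [hiq]⟩
      simp [List.Chain', List.isChain_cons_cons, he]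
    have := hq3 i hiS _ hpath
    simp only [List.mem_cons, List.mem_singleton] at this
    rcases this with h | h | h
    · exact hip h.symm
    · exact hqp h.symm
    · simp at h
  refine ⟨hiS, hip, ?_⟩
  intro s hs l hl
  by_cases hql : q ∈ l
  · obtain ⟨a, b, rfl⟩ := List.append_of_mem hql
    have hp := hq3 s hs _ (path_prefix hl rfl)
    rcases List.mem_append.mp hp with h | h
    · exact List.mem_append.mpr (Or.inl h)
    · simp only [List.mem_singleton] at h
      exact absurd h.symm hqp
  · have hp := hq3 s hs _ (path_concat hl he hql)
    rcases List.mem_append.mp hp with h | h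
    · exact h
    · simp only [List.mem_singleton] at h
      exact absurd h.symm hqp

/-- there is a path from `pj` to `q` all of whose intermediate nodes are persuaded by `pj`. -/
lemma exists_cluster_path {pj q : V} (hq : Persuaded E S pj q)
    (hreach : ∀ v, v ∉ S → ∃ s ∈ S, ∃ l, IsPathList E s v l) :
    ∃ l₂ : List V, List.Chain' E (pj :: l₂) ∧ (pj :: l₂).getLast? = some q ∧
      ∀ v ∈ l₂, Persuaded E S pj v := by
  obtain ⟨hqS, hqp, hq3⟩ := hq
  obtain ⟨s, hs, l, hl⟩ := hreach q hqS
  have hpl : pj ∈ l := hq3 s hs l hl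
  obtain ⟨l₁, l₂, rfl⟩ := List.append_of_mem hpl
  obtain ⟨hc, hh, hg, hnd⟩ := path_suffix hl rfl
  refine ⟨l₂, hc, hg, ?_⟩
  intro v hv
  have hpjl₂ : pj ∉ l₂ := (List.nodup_cons.mp hnd).1
  have hvp : v ≠ pj := fun h => hpjl₂ (h ▸ hv)
  obtain ⟨m₁, m₂, hm⟩ := List.append_of_mem hv
  have hdec : pj :: l₂ = (pj :: m₁) ++ v :: m₂ := by rw [hm]; rfl
  obtain ⟨hc2, hh2, hg2, hnd2⟩ := path_suffix ⟨hc, hh, hg, hnd⟩ hdec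
  have hpjnot : pj ∉ v :: m₂ := by
    intro hmem
    exact hpjl₂ (by rw [hm]; exact List.mem_append.mpr (Or.inr hmem))
  have hvS : v ∉ S := by
    intro hvS
    exact hpjnot (hq3 v hvS _ ⟨hc2, hh2, hg2, hnd2⟩)
  refine ⟨hvS, hvp, ?_⟩
  intro s' hs' l'' hl''
  by_contra hpjl''
  have hl''nil : l'' ≠ [] := by
    rintro rfl
    obtain ⟨-, h2, -, -⟩ := hl''
    simp at h2
  cases m₂ with
  | nil =>
    have hvq : v = q := by simpa using hg2
    exact hpjl'' (hq3 s' hs' l'' (hvq ▸ hl''))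
  | cons w m₂' =>
    have hEvw : E v w ∧ (w :: m₂').Chain' E := by
      unfold List.Chain' at hc2
      rw [List.isChain_cons_cons] at hc2
      exact ⟨hc2.1, hc2.2⟩
    have hchain : (l'' ++ (w :: m₂')).Chain' E := by
      refine List.IsChain.append hl''.1 hEvw.2 ?_
      intro x hx y hy
      rw [hl''.2.2.1] at hx
      cases hx
      rw [List.head?_cons] at hy
      cases hy
      exact hEvw.1
    have hhead : (l'' ++ (w :: m₂')).head? = some s' := by
      rw [← hl''.2.1]
      simp [List.head?_append_of_ne_nil _ hl''nil]
    have hlast : (l'' ++ (w :: m₂')).getLast? = some q := by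
      rw [List.getLast?_append,
        Option.or_of_isSome (by simp [List.getLast?_isSome])]
      rw [← hg2]
      show _ = ([v] ++ (w :: m₂')).getLast?
      rw [List.getLast?_append,
        Option.or_of_isSome (by simp [List.getLast?_isSome])]
    obtain ⟨lp, hlp, hsub⟩ := exists_path_of_chain _ s' q hchain hhead hlast
    have hpjin : pj ∈ l'' ++ (w :: m₂') := hsub pj (hq3 s' hs' lp hlp)
    rcases List.mem_append.mp hpjin with h | h
    · exact hpjl'' h
    · exact hpjnot (List.mem_cons_of_mem _ h)

end SFJaux

namespace SFJaux

open Finset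

lemma cluster_le {n : ℕ} {E : Fin n → Fin n → Prop} {S : Set (Fin n)}
    {W : Matrix (Fin n) (Fin n) ℝ}
    (hE : ∀ i j, E j i ↔ W i j ≠ 0)
    (hW : ∀ i, ∑ j', |W i j'| = 1)
    (hreach : ∀ v, v ∉ S → ∃ s ∈ S, ∃ l, IsPathList E s v l)
    {pj : Fin n}
    (hcoop : ∀ q, Persuaded E S pj q → ∀ i, 0 ≤ W q i)
    (y : Fin n → ℝ)
    (hy : ∀ q, Persuaded E S pj q → y q = ∑ u, W q u * y u) :
    ∀ q, Persuaded E S pj q → y q ≤ y pj := by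
  classical
  set P : Finset (Fin n) :=
    Finset.univ.filter (fun i => i = pj ∨ Persuaded E S pj i) with hP
  have hpjP : pj ∈ P := by simp [hP]
  have hPne : P.Nonempty := ⟨pj, hpjP⟩
  set M : ℝ := P.sup' hPne y with hM
  have hle : ∀ i, (i = pj ∨ Persuaded E S pj i) → y i ≤ M := by
    intro i hi
    exact Finset.le_sup' y (by simp [hP, hi])
  -- one-step propagation of the max backwards along an edge
  have hstep : ∀ w, Persuaded E S pj w → y w = M →
      ∀ h, W w h ≠ 0 → y h = M := by
    intro w hw hwM h hWh
    have hrow1 : ∑ u, W w u = 1 := by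
      rw [← hW w]
      exact Finset.sum_congr rfl fun u _ => (abs_of_nonneg (hcoop w hw u)).symm
    have hmem : ∀ u, W w u ≠ 0 → y u ≤ M := by
      intro u hu
      by_cases huw : u = w
      · subst huw; exact hwM.le
      · have he : E u w := (hE w u).mpr hu
        exact hle u (persuaded_in_nbr hw he huw)
    have hsum0 : ∑ u, W w u * (M - y u) = 0 := by
      have : ∑ u, W w u * (M - y u) = (∑ u, W w u) * M - ∑ u, W w u * y u := by
        rw [Finset.sum_mul]
        rw [← Finset.sum_sub_distrib]
        exact Finset.sum_congr rfl fun u _ => by ring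
      rw [this, hrow1, one_mul, ← hy w hw, hwM, sub_self]
    have hnn : ∀ u ∈ Finset.univ, 0 ≤ W w u * (M - y u) := by
      intro u _
      by_cases hu : W w u = 0
      · simp [hu]
      · exact mul_nonneg (hcoop w hw u) (sub_nonneg.mpr (hmem u hu))
    have := (Finset.sum_eq_zero_iff_of_nonneg hnn).mp hsum0 h (Finset.mem_univ h)
    rcases mul_eq_zero.mp this with h1 | h2
    · exact absurd h1 hWh
    · linarith [sub_eq_zero.mp h2]
  -- propagate the max along a path back to its head
  have haux : ∀ l₂ : List (Fin n), ∀ h : Fin n, List.Chain' E (h :: l₂) →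
      (∀ v ∈ l₂, Persuaded E S pj v) → ∀ t, (h :: l₂).getLast? = some t →
      y t = M → y h = M := by
    intro l₂
    induction l₂ with
    | nil =>
      intro h _ _ t hlast htM
      have : h = t := by simpa using hlast
      rw [this]; exact htM
    | cons w l₂' ih =>
      intro h hc hpers t hlast htM
      unfold List.Chain' at hc
      rw [List.isChain_cons_cons] at hc
      have hwM : y w = M := by
        refine ih w hc.2 (fun v hv => hpers v (List.mem_cons_of_mem _ hv)) t ?_ htM
        rw [← hlast]
        show _ = ([h] ++ (w :: l₂')).getLast?
        rw [List.getLast?_append,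
          Option.or_of_isSome (by simp [List.getLast?_isSome])]
      exact hstep w (hpers w List.mem_cons_self) hwM h ((hE w h).mp hc.1)
  -- the max is attained, and equals `y pj`
  obtain ⟨q₀, hq₀P, hq₀⟩ := Finset.exists_mem_eq_sup' hPne y
  have hpjM : y pj = M := by
    rcases (Finset.mem_filter.mp hq₀P).2 with rfl | hq₀pers
    · exact hq₀.symm
    · obtain ⟨l₂, hc, hlast, hpers⟩ := exists_cluster_path hq₀pers hreach
      exact haux l₂ pj hc hpers q₀ hlast hq₀.symm
  intro q hq
  rw [hpjM]
  exact hle q (Or.inr hq)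

end SFJaux

namespace SFJaux

/-- row absolute sum of the `k`-th power. -/
noncomputable def rabs {n : ℕ} (A : Matrix (Fin n) (Fin n) ℝ) (k : ℕ) (v : Fin n) : ℝ :=
  ∑ j, |(A ^ k) v j|

lemma rabs_nonneg {n : ℕ} (A : Matrix (Fin n) (Fin n) ℝ) (k : ℕ) (v : Fin n) :
    0 ≤ rabs A k v :=
  Finset.sum_nonneg fun j _ => abs_nonneg _

lemma rabs_zero {n : ℕ} (A : Matrix (Fin n) (Fin n) ℝ) (v : Fin n) :
    rabs A 0 v = 1 := by
  rw [rabs, pow_zero]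
  rw [Finset.sum_eq_single v (fun b _ hb => by simp [Matrix.one_apply, Ne.symm hb])
    (by simp)]
  simp [Matrix.one_apply]

lemma rabs_add_le {n : ℕ} (A : Matrix (Fin n) (Fin n) ℝ) (k m : ℕ) (v : Fin n) :
    rabs A (k + m) v ≤ ∑ u, |(A ^ k) v u| * rabs A m u := by
  unfold rabs
  rw [pow_add]
  calc ∑ j, |(A ^ k * A ^ m) v j|
      ≤ ∑ j, ∑ u, |(A ^ k) v u| * |(A ^ m) u j| := by
        refine Finset.sum_le_sum fun j _ => ?_
        rw [Matrix.mul_apply]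
        refine le_trans (Finset.abs_sum_le_sum_abs _ _) ?_
        exact le_of_eq (Finset.sum_congr rfl fun u _ => abs_mul _ _)
    _ = ∑ u, |(A ^ k) v u| * ∑ j, |(A ^ m) u j| := by
        rw [Finset.sum_comm]
        exact Finset.sum_congr rfl fun u _ => (Finset.mul_sum _ _ _).symm

lemma rabs_add_le_mul {n : ℕ} (A : Matrix (Fin n) (Fin n) ℝ) (k m : ℕ) (v : Fin n)
    {C : ℝ} (hC : ∀ u, rabs A m u ≤ C) :
    rabs A (k + m) v ≤ rabs A k v * C := by
  refine le_trans (rabs_add_le A k m v) ?_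
  rw [rabs, Finset.sum_mul]
  exact Finset.sum_le_sum fun u _ =>
    mul_le_mul_of_nonneg_left (hC u) (abs_nonneg _)

lemma rabs_mulVec_bound {n : ℕ} (A : Matrix (Fin n) (Fin n) ℝ) (k : ℕ) (v : Fin n)
    (y : Fin n → ℝ) {B : ℝ} (hB : ∀ u, |y u| ≤ B) :
    |((A ^ k).mulVec y) v| ≤ rabs A k v * B := by
  rw [Matrix.mulVec, dotProduct]
  refine le_trans (Finset.abs_sum_le_sum_abs _ _) ?_
  rw [rabs, Finset.sum_mul]
  refine Finset.sum_le_sum fun u _ => ?_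
  rw [abs_mul]
  exact mul_le_mul_of_nonneg_left (hB u) (abs_nonneg _)

end SFJaux

open SFJaux

/-- Multiconsensus under the signed Friedkin-Johnsen model: if (i) every
non-stubborn agent has a path from a stubborn agent, (ii) there are `z` LTP
agents whose singletons together with their persuaded sets cover all nodes, and
(iii) every incoming edge at every node of each persuaded set is cooperative,
then for each cluster `{p j} ∪ N_{p j}` the opinions of any two agents in the
cluster converge to a common limit, for any initial condition. -/
theorem SFJ_multiconsensus {n z : ℕ}
    (W : Matrix (Fin n) (Fin n) ℝ) (β : Fin n → ℝ) (E : Fin n → Fin n → Prop)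
    (S : Set (Fin n))
    (hE : ∀ i j, E j i ↔ W i j ≠ 0)
    (hS : ∀ i, i ∈ S ↔ 0 < β i)
    (hβ : ∀ i, β i ∈ Set.Icc (0 : ℝ) 1)
    (hW : ∀ i, ∑ j, |W i j| = 1)
    (hm : 1 < Nat.card S)
    (hreach : ∀ v, v ∉ S → ∃ s ∈ S, ∃ l : List (Fin n), IsPathList E s v l)
    (p : Fin z → Fin n) (hinj : Function.Injective p)
    (hLTP : ∀ j, IsLTP E S (p j))
    (hcover : ∀ v : Fin n, ∃ j, v = p j ∨ Persuaded E S (p j) v)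
    (hcoop : ∀ j, ∀ q, Persuaded E S (p j) q → ∀ i, 0 ≤ W q i) :
    ∀ x : ℕ → Fin n → ℝ,
      (∀ k, x (k + 1) = ((1 - Matrix.diagonal β) * W).mulVec (x k)
          + (Matrix.diagonal β).mulVec (x 0)) →
      ∀ j, ∀ i₁ i₂ : Fin n,
        (i₁ = p j ∨ Persuaded E S (p j) i₁) →
        (i₂ = p j ∨ Persuaded E S (p j) i₂) →
        Filter.Tendsto (fun k => x k i₁ - x k i₂) Filter.atTop (nhds 0) := by
  intro x hx j i₁ i₂ h₁ h₂
  classical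
  have hn0 : 0 < n := by
    rcases Nat.eq_zero_or_pos n with rfl | h
    · haveI : IsEmpty ↥S := ⟨fun a => a.1.elim0⟩
      rw [Nat.card_of_isEmpty] at hm
      omega
    · exact h
  haveI : Nonempty (Fin n) := Fin.pos_iff_nonempty.mp hn0
  set A := (1 - Matrix.diagonal β) * W with hAdef
  have hAentry : ∀ v u, A v u = (1 - β v) * W v u := by
    intro v u
    rw [hAdef,
      show (1 : Matrix (Fin n) (Fin n) ℝ) - Matrix.diagonal β
        = Matrix.diagonal (fun i => 1 - β i) by
        rw [← Matrix.diagonal_one, Matrix.diagonal_sub],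
      Matrix.diagonal_mul]
  have hβ0 : ∀ v, v ∉ S → β v = 0 := by
    intro v hv
    rcases eq_or_lt_of_le (hβ v).1 with h | h
    · exact h.symm
    · exact absurd ((hS v).mpr h) hv
  have hr1 : ∀ v, rabs A 1 v = 1 - β v := by
    intro v
    rw [rabs, pow_one]
    calc ∑ u, |A v u| = ∑ u, (1 - β v) * |W v u| := by
          refine Finset.sum_congr rfl fun u _ => ?_
          rw [hAentry, abs_mul,
            abs_of_nonneg (by linarith [(hβ v).2] : (0:ℝ) ≤ 1 - β v)]
      _ = 1 - β v := by rw [← Finset.mul_sum, hW v, mul_one]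
  have hrle1 : ∀ k v, rabs A k v ≤ 1 := by
    intro k
    induction k with
    | zero => intro v; rw [rabs_zero]
    | succ k ih =>
      intro v
      calc rabs A (k + 1) v = rabs A (1 + k) v := by rw [add_comm]
        _ ≤ rabs A 1 v * 1 := rabs_add_le_mul A 1 k v ih
        _ ≤ 1 := by rw [mul_one, hr1]; linarith [(hβ v).1]
  have hstep : ∀ v u k, v ∉ S → W v u ≠ 0 → rabs A k u < 1 →
      rabs A (1 + k) v < 1 := by
    intro v u k hvS hWvu hu
    refine lt_of_le_of_lt (rabs_add_le A 1 k v) ?_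
    have hb0 := hβ0 v hvS
    have habs : ∀ u', |(A ^ 1) v u'| = |W v u'| := by
      intro u'
      rw [pow_one, hAentry, hb0]
      norm_num
    calc ∑ u', |(A ^ 1) v u'| * rabs A k u'
        < ∑ u', |(A ^ 1) v u'| * 1 := by
          refine Finset.sum_lt_sum
            (fun i _ => mul_le_mul_of_nonneg_left (hrle1 k i) (abs_nonneg _))
            ⟨u, Finset.mem_univ u, ?_⟩
          have hpos : 0 < |(A ^ 1) v u| := by
            rw [habs]; exact abs_pos.mpr hWvu
          exact (mul_lt_mul_iff_right₀ hpos).mpr (by simpa using hu)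
      _ = ∑ u', |W v u'| := by
          refine Finset.sum_congr rfl fun u' _ => ?_
          simpa using habs u'
      _ = 1 := hW v
  have hpath : ∀ l : List (Fin n), ∀ s v, IsPathList E s v l → s ∈ S →
      rabs A l.length v < 1 := by
    intro l
    induction l using List.reverseRecOn with
    | nil =>
      intro s v hl _
      obtain ⟨-, h, -, -⟩ := hl
      simp at h
    | append_singleton l v' ih =>
      intro s v hl hsS
      have hv : v = v' := by
        obtain ⟨-, -, hg, -⟩ := hl
        have : some v' = some v := by
          rw [← hg, List.getLast?_append,
            Option.or_of_isSome (by simp [List.getLast?_isSome])]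
          simp
        exact (Option.some_injective _ this).symm
      subst hv
      by_cases hlnil : l = []
      · subst hlnil
        obtain ⟨-, hh, -, -⟩ := hl
        have hsv : s = v := by simpa using hh.symm
        subst hsv
        have : rabs A 1 s = 1 - β s := hr1 s
        have hβs := (hS s).mp hsS
        simpa [this] using by linarith
      · obtain ⟨u, hu⟩ := Option.isSome_iff_exists.mp
          ((List.getLast?_isSome).mpr hlnil)
        have hlpath : IsPathList E s u l := by
          obtain ⟨hc, hh, hg, hnd⟩ := hl
          refine ⟨hc.prefix ⟨[v], rfl⟩, ?_, hu,
            hnd.sublist (List.sublist_append_left l [v])⟩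
          rw [← hh, List.head?_append_of_ne_nil _ hlnil]
        have hih := ih s u hlpath hsS
        have hedge : E u v := by
          obtain ⟨hc, -, -, -⟩ := hl
          have h2 := (List.isChain_append.mp hc).2.2
          exact h2 u hu v rfl
        have hWvu : W v u ≠ 0 := (hE v u).mp hedge
        rw [List.length_append, List.length_singleton, add_comm]
        by_cases hvS : v ∈ S
        · calc rabs A (1 + l.length) v
              ≤ rabs A 1 v * 1 := rabs_add_le_mul A 1 l.length v (hrle1 _)
            _ < 1 := by
                rw [mul_one, hr1]
                linarith [(hS v).mp hvS]
        · exact hstep v u l.length hvS hWvu hih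
  have hrn : ∀ v, rabs A n v < 1 := by
    intro v
    by_cases hvS : v ∈ S
    · calc rabs A n v = rabs A (1 + (n - 1)) v := by
            rw [Nat.add_sub_cancel' (show 1 ≤ n from hn0)]
        _ ≤ rabs A 1 v * 1 := rabs_add_le_mul A 1 (n - 1) v (hrle1 _)
        _ < 1 := by
            rw [mul_one, hr1]
            linarith [(hS v).mp hvS]
    · obtain ⟨s, hs, l, hl⟩ := hreach v hvS
      have hLn : l.length ≤ n := by
        simpa using hl.2.2.2.length_le_card
      calc rabs A n v = rabs A (l.length + (n - l.length)) v := by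
            rw [Nat.add_sub_cancel' hLn]
        _ ≤ rabs A l.length v * 1 := rabs_add_le_mul A _ _ v (hrle1 _)
        _ < 1 := by
            rw [mul_one]
            exact hpath l s v hl hs
  set c : ℝ := Finset.univ.sup' Finset.univ_nonempty (rabs A n) with hcdef
  have hc1 : c < 1 := (Finset.sup'_lt_iff _).mpr fun v _ => hrn v
  have hc0 : 0 ≤ c :=
    le_trans (rabs_nonneg A n (Classical.arbitrary _))
      (Finset.le_sup' _ (Finset.mem_univ _))
  have hgeo : ∀ t v, rabs A (n * t) v ≤ c ^ t := by
    intro t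
    induction t with
    | zero => intro v; rw [mul_zero, rabs_zero, pow_zero]
    | succ t ih =>
      intro v
      have hnt : n * (t + 1) = n + n * t := by ring
      rw [hnt]
      refine le_trans (rabs_add_le_mul A n (n * t) v ih) ?_
      calc rabs A n v * c ^ t
          ≤ c * c ^ t := mul_le_mul_of_nonneg_right
            (Finset.le_sup' _ (Finset.mem_univ v)) (pow_nonneg hc0 t)
        _ = c ^ (t + 1) := (pow_succ' c t).symm
  have hbound : ∀ k v, rabs A k v ≤ c ^ (k / n) := by
    intro k v
    calc rabs A k v = rabs A (n * (k / n) + k % n) v := by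
          rw [Nat.div_add_mod]
      _ ≤ rabs A (n * (k / n)) v * 1 := rabs_add_le_mul A _ _ v (hrle1 _)
      _ ≤ c ^ (k / n) := by rw [mul_one]; exact hgeo _ v
  have hczero : Filter.Tendsto (fun k : ℕ => c ^ (k / n)) Filter.atTop (nhds 0) := by
    refine (tendsto_pow_atTop_nhds_zero_of_lt_one hc0 hc1).comp ?_
    refine Filter.tendsto_atTop_atTop.mpr fun b => ⟨n * b, fun a ha => ?_⟩
    refine (Nat.le_div_iff_mul_le hn0).mpr ?_
    rw [Nat.mul_comm]
    exact ha
  set b : Fin n → ℝ := (Matrix.diagonal β).mulVec (x 0) with hbdef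
  -- the map `y ↦ (1 - A) y` is injective, hence surjective
  have hker : ∀ y : Fin n → ℝ, (1 - A).mulVec y = 0 → y = 0 := by
    intro y hy
    rw [Matrix.sub_mulVec, Matrix.one_mulVec, sub_eq_zero] at hy
    have hiter : ∀ k, (A ^ k).mulVec y = y := by
      intro k
      induction k with
      | zero => rw [pow_zero, Matrix.one_mulVec]
      | succ k ih => rw [pow_succ, ← Matrix.mulVec_mulVec, ← hy, ih]
    funext v
    set B := Finset.univ.sup' Finset.univ_nonempty (fun u => |y u|) with hBdef
    have hBle : ∀ u, |y u| ≤ B :=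
      fun u => Finset.le_sup' (fun w => |y w|) (Finset.mem_univ u)
    have hk : ∀ k, |y v| ≤ c ^ (k / n) * B := by
      intro k
      calc |y v| = |((A ^ k).mulVec y) v| := by rw [hiter k]
        _ ≤ rabs A k v * B := rabs_mulVec_bound A k v y hBle
        _ ≤ c ^ (k / n) * B := mul_le_mul_of_nonneg_right (hbound k v)
            (le_trans (abs_nonneg (y v)) (hBle v))
    have hlim : Filter.Tendsto (fun k : ℕ => c ^ (k / n) * B)
        Filter.atTop (nhds 0) := by
      simpa using hczero.mul_const B
    have h0 : |y v| ≤ 0 := ge_of_tendsto' hlim hk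
    have := abs_nonneg (y v)
    simp only [Pi.zero_apply]
    linarith [abs_nonneg (y v), le_antisymm h0 (abs_nonneg (y v)),
      abs_eq_zero.mp (le_antisymm h0 (abs_nonneg (y v)))]
  have hinj' : Function.Injective ((1 - A).mulVecLin) := by
    intro y₁ y₂ h
    have h0 : (1 - A).mulVec (y₁ - y₂) = 0 := by
      rw [Matrix.mulVec_sub]
      rw [sub_eq_zero]
      exact h
    have := hker _ h0
    rwa [sub_eq_zero] at this
  have hsurj : Function.Surjective ((1 - A).mulVecLin) :=
    LinearMap.injective_iff_surjective.mp hinj'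
  obtain ⟨xs, hxs⟩ := hsurj b
  have hxs2 : (1 - A).mulVec xs = b := hxs
  have hxs' : ∀ v, xs v = (A.mulVec xs) v + b v := by
    intro v
    rw [Matrix.sub_mulVec, Matrix.one_mulVec] at hxs2
    have h := congrFun hxs2 v
    simp only [Pi.sub_apply] at h
    linarith
  set e0 : Fin n → ℝ := fun v => x 0 v - xs v with he0
  have herr : ∀ k v, x k v - xs v = ((A ^ k).mulVec e0) v := by
    intro k
    induction k with
    | zero =>
      intro v
      rw [pow_zero, Matrix.one_mulVec]
    | succ k ih =>
      intro v
      have h1 : x (k + 1) v = (A.mulVec (x k)) v + b v := by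
        rw [hx k]; rfl
      have h2 : (A.mulVec (x k)) v - (A.mulVec xs) v
          = (A.mulVec fun u => x k u - xs u) v := by
        simp only [Matrix.mulVec, dotProduct, mul_sub]
        rw [← Finset.sum_sub_distrib]
      have h3 : (fun u => x k u - xs u) = (A ^ k).mulVec e0 := funext ih
      calc x (k + 1) v - xs v = (A.mulVec (x k)) v - (A.mulVec xs) v := by
            rw [h1, hxs' v]; ring
        _ = (A.mulVec ((A ^ k).mulVec e0)) v := by rw [h2, h3]
        _ = ((A ^ (k + 1)).mulVec e0) v := by
            rw [Matrix.mulVec_mulVec, ← pow_succ']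
  have hlimv : ∀ v, Filter.Tendsto (fun k => x k v - xs v)
      Filter.atTop (nhds 0) := by
    intro v
    set B := Finset.univ.sup' Finset.univ_nonempty (fun u => |e0 u|) with hB2
    have hBle : ∀ u, |e0 u| ≤ B :=
      fun u => Finset.le_sup' (fun w => |e0 w|) (Finset.mem_univ u)
    have hB0 : 0 ≤ B := le_trans (abs_nonneg _) (hBle (Classical.arbitrary _))
    refine squeeze_zero_norm (fun k => ?_) (by simpa using hczero.mul_const B)
    rw [Real.norm_eq_abs, herr k v]
    exact le_trans (rabs_mulVec_bound A k v e0 hBle)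
      (mul_le_mul_of_nonneg_right (hbound k v) hB0)
  have hfixq : ∀ q, Persuaded E S (p j) q → xs q = ∑ u, W q u * xs u := by
    intro q hq
    have hb0 : β q = 0 := hβ0 q hq.1
    have hbq : b q = 0 := by
      rw [hbdef, Matrix.mulVec_diagonal, hb0, zero_mul]
    rw [hxs' q, hbq, add_zero, Matrix.mulVec, dotProduct]
    exact Finset.sum_congr rfl fun u _ => by rw [hAentry, hb0]; ring
  have hcons : ∀ i, (i = p j ∨ Persuaded E S (p j) i) → xs i = xs (p j) := by
    intro i hi
    rcases hi with rfl | hi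
    · rfl
    have hle1 := cluster_le hE hW hreach (hcoop j) xs hfixq i hi
    have hle2 := cluster_le hE hW hreach (hcoop j) (fun u => -xs u)
      (fun q hq => by
        show -xs q = ∑ u, W q u * -xs u
        rw [hfixq q hq]
        rw [← Finset.sum_neg_distrib]
        exact Finset.sum_congr rfl fun u _ => by ring) i hi
    have hle2' : -xs i ≤ -xs (p j) := hle2
    linarith
  have hrw : (fun k => x k i₁ - x k i₂)
      = fun k => (x k i₁ - xs i₁) - (x k i₂ - xs i₂) := by
    funext k
    rw [hcons i₁ h₁, hcons i₂ h₂]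
    ring
  rw [hrw]
  simpa using (hlimv i₁).sub (hlimv i₂)
end
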